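/- Let q be an odd prime power and let C, C' be proper conics in PG(2,q) in nested position. Then C and C' are disjoint and have no tangent line in common. -/

import Mathlib

open Matrix

/-- The zero set in `PG(2,q)` of the quadratic form associated to a symmetric matrix `M`. -/
def conicSet {F : Type} [Field F] (M : Matrix (Fin 3) (Fin 3) F) :
    Set (Projectivization F (Fin 3 → F)) :=
  {p | p.rep ⬝ᵥ M.mulVec p.rep = 0}

/-- A proper conic: the zero set of a quadratic form with invertible symmetric matrix. -/
def IsProperConic {F : Type} [Field F] (S : Set (Projectivization F (Fin 3 → F))) : Prop :=
  ∃ M : Matrix (Fin 3) (Fin 3) F, M.IsSymm ∧ IsUnit M.det ∧ S = conicSet M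

/-- A line of `PG(2,q)`, viewed as a point set. -/
def IsLineSet {F : Type} [Field F] (S : Set (Projectivization F (Fin 3 → F))) : Prop :=
  ∃ l : Fin 3 → F, l ≠ 0 ∧ S = {p : Projectivization F (Fin 3 → F) | l ⬝ᵥ p.rep = 0}

/-- `L` is a tangent line of the conic `C`: a line meeting `C` in exactly one point. -/
def IsTangentTo {F : Type} [Field F] (C L : Set (Projectivization F (Fin 3 → F))) : Prop :=
  IsLineSet L ∧ ∃ p, L ∩ C = {p}

/-- `p` is an external point of `C`: `p ∉ C` and exactly two tangents of `C` pass through `p`. -/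
def IsExternalPoint {F : Type} [Field F] (C : Set (Projectivization F (Fin 3 → F)))
    (p : Projectivization F (Fin 3 → F)) : Prop :=
  p ∉ C ∧ {L : Set (Projectivization F (Fin 3 → F)) | IsTangentTo C L ∧ p ∈ L}.ncard = 2

/-- `p` is an internal point of `C`: `p ∉ C` and no tangent of `C` passes through `p`. -/
def IsInternalPoint {F : Type} [Field F] (C : Set (Projectivization F (Fin 3 → F)))
    (p : Projectivization F (Fin 3 → F)) : Prop :=
  p ∉ C ∧ ∀ L, IsTangentTo C L → p ∉ L

/-- Two conics are in nested position: all points of each are external to the other, or all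
points of each are internal to the other (independently for each of the two conics). -/
def NestedPosition {F : Type} [Field F]
    (C C' : Set (Projectivization F (Fin 3 → F))) : Prop :=
  ((∀ p ∈ C, IsExternalPoint C' p) ∨ (∀ p ∈ C, IsInternalPoint C' p)) ∧
  ((∀ p ∈ C', IsExternalPoint C p) ∨ (∀ p ∈ C', IsInternalPoint C p))

/-!
If the two conics had a common tangent `L`, each would have a point on `L`, and such a point is
not internal to the other conic; nested position then forces every point of `C'` to be external
to `C`, and vice versa. Count the incident pairs (point of `C'`, tangent of `C`): every point of
`C'` lies on exactly two tangents of `C`, every tangent of `C` meets `C'` in at most two points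
(a line meets a proper conic in at most two points), and `L` meets `C'` in only one. Hence `C'`
has fewer points than `C` has tangents, and `C` has at most as many tangents as points, since
each tangent is the polar line of its point of contact. So `|C'| < |C|`, and symmetrically
`|C| < |C'|`. Disjointness is immediate, as external and internal points lie off the conic.
-/

open Module

theorem LinearMap.BilinForm.two_mul_finrank_le_of_le_orthogonal {K V : Type*} [Field K]
    [AddCommGroup V] [Module K V] [FiniteDimensional K V] {B : LinearMap.BilinForm K V}
    (hB : B.Nondegenerate) {W : Submodule K V} (hW : W ≤ B.orthogonal W) :
    2 * finrank K W ≤ finrank K V := by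
  have := Submodule.finrank_mono hW
  rw [LinearMap.BilinForm.finrank_orthogonal hB] at this
  have := W.finrank_le
  omega

namespace Matrix

variable {F : Type} [Field F] {n : Type*} [Fintype n]

theorem dotProduct_mulVec_comm_of_isSymm {M : Matrix n n F} (hM : M.IsSymm) (x y : n → F) :
    x ⬝ᵥ M *ᵥ y = y ⬝ᵥ M *ᵥ x := by
  rw [dotProduct_mulVec, ← mulVec_transpose, hM.eq, dotProduct_comm]

theorem dotProduct_mulVec_smul_add_smul {M : Matrix n n F} (hM : M.IsSymm) (a b : F)
    (x y : n → F) :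
    (a • x + b • y) ⬝ᵥ M *ᵥ (a • x + b • y) =
      a ^ 2 * (x ⬝ᵥ M *ᵥ x) + 2 * a * b * (x ⬝ᵥ M *ᵥ y) + b ^ 2 * (y ⬝ᵥ M *ᵥ y) := by
  simp only [mulVec_add, mulVec_smul, add_dotProduct, dotProduct_add, smul_dotProduct,
    dotProduct_smul, smul_eq_mul, dotProduct_mulVec_comm_of_isSymm hM y x]
  ring

theorem finrank_ker_dotProductEquiv [DecidableEq n] {l : n → F} (hl : l ≠ 0) :
    finrank F (LinearMap.ker (dotProductEquiv F n l)) + 1 = Fintype.card n := by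
  rw [Module.Dual.finrank_ker_add_one_of_ne_zero (by simpa using hl),
    Module.finrank_fintype_fun_eq_card]

theorem not_linearIndependent_of_isotropic_pair [DecidableEq n] {M : Matrix n n F}
    (hM : M.IsSymm) (hdet : IsUnit M.det) (hn : Fintype.card n ≤ 3) {v w : n → F}
    (hv : v ⬝ᵥ M *ᵥ v = 0) (hvw : v ⬝ᵥ M *ᵥ w = 0) (hw : w ⬝ᵥ M *ᵥ w = 0) :
    ¬LinearIndependent F ![v, w] := by
  intro hind
  have hwv : w ⬝ᵥ M *ᵥ v = 0 := by rw [dotProduct_mulVec_comm_of_isSymm hM, hvw]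
  have hB : M.toBilin'.Nondegenerate :=
    LinearMap.BilinForm.nondegenerate_toBilin'_iff_det_ne_zero.mpr hdet.ne_zero
  have hW : Submodule.span F {v, w} ≤ M.toBilin'.orthogonal (Submodule.span F {v, w}) := by
    refine Submodule.span_le.mpr fun u hu => ?_
    rw [SetLike.mem_coe, LinearMap.BilinForm.mem_orthogonal_iff]
    intro x hx
    obtain ⟨a, b, rfl⟩ := Submodule.mem_span_pair.mp hx
    rw [Set.mem_insert_iff, Set.mem_singleton_iff] at hu
    rcases hu with hu | hu <;> simp [hu, toBilin'_apply', hv, hvw, hw, hwv]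
  have hWrank : finrank F (Submodule.span F {v, w}) = 2 := by
    rw [← range_cons_cons_empty v w ![]]
    exact finrank_span_eq_card hind
  have := LinearMap.BilinForm.two_mul_finrank_le_of_le_orthogonal hB hW
  rw [hWrank, Module.finrank_fintype_fun_eq_card] at this
  omega

theorem ker_dotProductEquiv_eq_of_le [DecidableEq n] {l m : n → F} (hl : l ≠ 0) (hm : m ≠ 0)
    (h : LinearMap.ker (dotProductEquiv F n l) ≤ LinearMap.ker (dotProductEquiv F n m)) :
    LinearMap.ker (dotProductEquiv F n l) = LinearMap.ker (dotProductEquiv F n m) :=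
  Submodule.eq_of_le_of_finrank_eq h <| by
    have := finrank_ker_dotProductEquiv hl
    have := finrank_ker_dotProductEquiv hm
    omega

theorem mem_span_pair_of_dotProduct_eq_zero [DecidableEq n] (hn : Fintype.card n = 3)
    {l v w u : n → F} (hl : l ≠ 0) (hvw : LinearIndependent F ![v, w]) (hv : l ⬝ᵥ v = 0)
    (hw : l ⬝ᵥ w = 0) (hu : l ⬝ᵥ u = 0) : u ∈ Submodule.span F {v, w} := by
  have hspan : Submodule.span F {v, w} = LinearMap.ker (dotProductEquiv F n l) := by
    refine Submodule.eq_of_le_of_finrank_eq ?_ ?_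
    · rw [Submodule.span_le, Set.insert_subset_iff, Set.singleton_subset_iff]
      exact ⟨hv, hw⟩
    · have := finrank_ker_dotProductEquiv hl
      rw [← range_cons_cons_empty v w ![], finrank_span_eq_card hvw]
      simp only [Fintype.card_fin]
      omega
  rw [hspan]
  exact hu

theorem eq_zero_or_eq_zero_of_isotropic_smul_add_smul [DecidableEq n] {M : Matrix n n F}
    (hM : M.IsSymm) (hdet : IsUnit M.det) (hn : Fintype.card n ≤ 3) (h2 : (2 : F) ≠ 0) {v w : n → F}
    (hvw : LinearIndependent F ![v, w]) (hv : v ⬝ᵥ M *ᵥ v = 0) (hw : w ⬝ᵥ M *ᵥ w = 0) {a b : F}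
    (h : (a • v + b • w) ⬝ᵥ M *ᵥ (a • v + b • w) = 0) : a = 0 ∨ b = 0 := by
  have hB : v ⬝ᵥ M *ᵥ w ≠ 0 := fun h0 =>
    not_linearIndependent_of_isotropic_pair hM hdet hn hv h0 hw hvw
  rw [dotProduct_mulVec_smul_add_smul hM, hv, hw] at h
  have : 2 * (a * b) * (v ⬝ᵥ M *ᵥ w) = 0 := by linear_combination h
  simpa [h2, hB] using this

end Matrix

open Finset in
theorem Set.ncard_lt_ncard_of_incidence {α : Type*} [Finite α] {S : Set α} {𝓑 : Set (Set α)}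
    {k : ℕ} (hS : ∀ x ∈ S, k ≤ {B ∈ 𝓑 | x ∈ B}.ncard) (h𝓑 : ∀ B ∈ 𝓑, (B ∩ S).ncard ≤ k)
    {B₀ : Set α} (hB₀ : B₀ ∈ 𝓑) (hB₀S : (B₀ ∩ S).ncard < k) : S.ncard < 𝓑.ncard := by
  classical
  have := Fintype.ofFinite α
  let r : α → Set α → Prop := fun x B => x ∈ B
  have above : ∀ x, #(𝓑.toFinset.bipartiteAbove r x) = {B ∈ 𝓑 | x ∈ B}.ncard := fun x => by
    rw [← Set.ncard_coe_finset, Finset.coe_bipartiteAbove]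
    simp [r]
  have below : ∀ B, #(S.toFinset.bipartiteBelow r B) = (B ∩ S).ncard := fun B => by
    rw [← Set.ncard_coe_finset, Finset.coe_bipartiteBelow]
    simp only [r, Set.mem_toFinset]
    rw [Set.inter_comm]
    rfl
  refine Nat.lt_of_mul_lt_mul_right (a := k) ?_
  rw [Set.ncard_eq_toFinset_card', Set.ncard_eq_toFinset_card']
  calc #S.toFinset * k ≤ ∑ x ∈ S.toFinset, #(𝓑.toFinset.bipartiteAbove r x) :=
        Finset.card_nsmul_le_sum _ _ _ fun x hx => (above x).symm ▸ hS x (by simpa using hx)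
    _ = ∑ B ∈ 𝓑.toFinset, #(S.toFinset.bipartiteBelow r B) :=
        Finset.sum_card_bipartiteAbove_eq_sum_card_bipartiteBelow r
    _ < ∑ B ∈ 𝓑.toFinset, k :=
        Finset.sum_lt_sum (fun B hB => (below B).symm ▸ h𝓑 B (by simpa using hB))
          ⟨B₀, by simpa using hB₀, (below B₀).symm ▸ hB₀S⟩
    _ = #𝓑.toFinset * k := by rw [Finset.sum_const, smul_eq_mul]

open scoped LinearAlgebra.Projectivization

namespace Projectivization

variable {K V : Type*} [Field K] [AddCommGroup V] [Module K V]

theorem eq_of_rep_eq_smul {p q : ℙ K V} {a : K} (h : p.rep = a • q.rep) : p = q := by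
  rw [← p.mk_rep, ← q.mk_rep]
  exact (mk_eq_mk_iff' K _ _ _ _).mpr ⟨a, h.symm⟩

theorem linearIndependent_rep_pair {p q : ℙ K V} (h : p ≠ q) :
    LinearIndependent K ![p.rep, q.rep] := by
  have := (independent_iff.mp ((independent_pair_iff_ne p q).mpr h))
  rwa [← FinVec.map_eq] at this

end Projectivization

section Conic

variable {F : Type} [Field F]

def lineSet (l : Fin 3 → F) : Set (ℙ F (Fin 3 → F)) :=
  {p | l ⬝ᵥ p.rep = 0}

theorem mk_mem_lineSet_iff {l v : Fin 3 → F} (hv : v ≠ 0) :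
    Projectivization.mk F v hv ∈ lineSet l ↔ l ⬝ᵥ v = 0 := by
  obtain ⟨a, ha⟩ := Projectivization.exists_smul_eq_mk_rep F v hv
  simp [lineSet, ← ha, Units.smul_def, dotProduct_smul]

theorem mk_mem_conicSet_iff {M : Matrix (Fin 3) (Fin 3) F} {v : Fin 3 → F} (hv : v ≠ 0) :
    Projectivization.mk F v hv ∈ conicSet M ↔ v ⬝ᵥ M *ᵥ v = 0 := by
  obtain ⟨a, ha⟩ := Projectivization.exists_smul_eq_mk_rep F v hv
  simp [conicSet, ← ha, Units.smul_def, dotProduct_smul, mulVec_smul]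

variable {M : Matrix (Fin 3) (Fin 3) F}

theorem ncard_lineSet_inter_conicSet_le_two (hM : M.IsSymm) (hdet : IsUnit M.det)
    (h2 : (2 : F) ≠ 0) {l : Fin 3 → F} (hl : l ≠ 0) :
    (lineSet l ∩ conicSet M).ncard ≤ 2 := by
  by_contra! h
  obtain ⟨p, q, r, ⟨hpl, hpC⟩, ⟨hql, hqC⟩, ⟨hrl, hrC⟩, hpq, hpr, hqr⟩ :=
    (Set.two_lt_ncard_iff (Set.finite_of_ncard_pos (by omega))).mp h
  have hind := Projectivization.linearIndependent_rep_pair hpq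
  obtain ⟨a, b, hab⟩ := Submodule.mem_span_pair.mp
    (mem_span_pair_of_dotProduct_eq_zero (Fintype.card_fin 3) hl hind hpl hql hrl)
  rcases eq_zero_or_eq_zero_of_isotropic_smul_add_smul hM hdet (by simp) h2 hind hpC hqC
    (by rw [hab]; exact hrC) with rfl | rfl
  · exact hqr (Projectivization.eq_of_rep_eq_smul (by simpa using hab.symm)).symm
  · exact hpr (Projectivization.eq_of_rep_eq_smul (by simpa using hab.symm)).symm

theorem lineSet_eq_of_inter_conicSet_eq_singleton (hM : M.IsSymm) (hdet : IsUnit M.det)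
    (h2 : (2 : F) ≠ 0) {l : Fin 3 → F} (hl : l ≠ 0) {p : ℙ F (Fin 3 → F)}
    (h : lineSet l ∩ conicSet M = {p}) : lineSet l = lineSet (p.rep ᵥ* M) := by
  set x := p.rep
  obtain ⟨hlx, hx⟩ : p ∈ lineSet l ∩ conicSet M := h ▸ rfl
  change l ⬝ᵥ x = 0 at hlx
  change x ⬝ᵥ M *ᵥ x = 0 at hx
  have hpolar : ∀ v, l ⬝ᵥ v = 0 → x ᵥ* M ⬝ᵥ v = 0 := by
    intro v hv
    rw [← dotProduct_mulVec]
    by_contra hβ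
    -- the second point of the conic on the line through `x` and `v`, as `v` is not conjugate to `x`
    set w := (v ⬝ᵥ M *ᵥ v) • x + (-2 * (x ⬝ᵥ M *ᵥ v)) • v
    have hwC : w ⬝ᵥ M *ᵥ w = 0 := by
      rw [dotProduct_mulVec_smul_add_smul hM, hx]
      ring
    have hwl : l ⬝ᵥ w = 0 := by simp [w, hv, hlx]
    obtain ⟨c, hc⟩ : ∃ c : F, w = c • x := by
      by_cases hw0 : w = 0
      · exact ⟨0, by simp [hw0]⟩
      have hwp : Projectivization.mk F w hw0 = p :=
        h.subset ⟨(mk_mem_lineSet_iff hw0).mpr hwl, (mk_mem_conicSet_iff hw0).mpr hwC⟩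
      obtain ⟨c, hc⟩ :=
        (Projectivization.mk_eq_mk_iff' F w x hw0 p.rep_nonzero).mp (hwp.trans p.mk_rep.symm)
      exact ⟨c, hc.symm⟩
    have hxw : x ⬝ᵥ M *ᵥ w = -2 * (x ⬝ᵥ M *ᵥ v) ^ 2 := by
      simp only [w, mulVec_add, mulVec_smul, dotProduct_add, dotProduct_smul, hx, smul_eq_mul]
      ring
    rw [hc, mulVec_smul, dotProduct_smul, hx, smul_zero] at hxw
    exact hβ (by simpa [h2] using hxw.symm)
  have hm : x ᵥ* M ≠ 0 := fun h0 => p.rep_nonzero (eq_zero_of_vecMul_eq_zero hdet.ne_zero h0)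
  have hker := ker_dotProductEquiv_eq_of_le hl hm fun v hv => hpolar v hv
  ext q
  exact SetLike.ext_iff.mp hker q.rep

theorem exists_eq_polar_of_isTangentTo (hM : M.IsSymm) (hdet : IsUnit M.det) (h2 : (2 : F) ≠ 0)
    {L : Set (ℙ F (Fin 3 → F))} (hL : IsTangentTo (conicSet M) L) :
    ∃ p ∈ conicSet M, L = lineSet (p.rep ᵥ* M) := by
  obtain ⟨⟨l, hl, rfl⟩, p, hp⟩ := hL
  exact ⟨p, (hp.symm ▸ rfl : p ∈ lineSet l ∩ conicSet M).2,
    lineSet_eq_of_inter_conicSet_eq_singleton hM hdet h2 hl hp⟩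

end Conic

theorem IsTangentTo.nonempty_inter {F : Type} [Field F] {C L : Set (ℙ F (Fin 3 → F))}
    (h : IsTangentTo C L) : (L ∩ C).Nonempty :=
  let ⟨p, hp⟩ := h.2
  ⟨p, hp ▸ rfl⟩

theorem forall_isExternalPoint_of_isTangentTo {F : Type} [Field F]
    {C C' L : Set (ℙ F (Fin 3 → F))}
    (h : (∀ p ∈ C, IsExternalPoint C' p) ∨ (∀ p ∈ C, IsInternalPoint C' p))
    (hL : IsTangentTo C L) (hL' : IsTangentTo C' L) : ∀ p ∈ C, IsExternalPoint C' p :=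
  h.resolve_right fun hint =>
    let ⟨p, hpL, hpC⟩ := hL.nonempty_inter
    (hint p hpC).2 L hL' hpL

namespace IsProperConic

variable {F : Type} [Field F] {C C' : Set (ℙ F (Fin 3 → F))}

theorem ncard_inter_le_two (hC : IsProperConic C) (h2 : (2 : F) ≠ 0)
    {L : Set (ℙ F (Fin 3 → F))} (hL : IsLineSet L) : (L ∩ C).ncard ≤ 2 := by
  obtain ⟨M, hM, hdet, rfl⟩ := hC
  obtain ⟨l, hl, rfl⟩ := hL
  exact ncard_lineSet_inter_conicSet_le_two hM hdet h2 hl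

theorem ncard_setOf_isTangentTo_le [Finite F] (hC : IsProperConic C) (h2 : (2 : F) ≠ 0) :
    {L | IsTangentTo C L}.ncard ≤ C.ncard := by
  obtain ⟨M, hM, hdet, rfl⟩ := hC
  calc {L | IsTangentTo (conicSet M) L}.ncard
      ≤ ((fun p => lineSet (p.rep ᵥ* M)) '' conicSet M).ncard :=
        Set.ncard_le_ncard fun L hL => by
          obtain ⟨p, hp, rfl⟩ := exists_eq_polar_of_isTangentTo hM hdet h2 hL
          exact ⟨p, hp, rfl⟩
    _ ≤ (conicSet M).ncard := Set.ncard_image_le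

theorem ncard_lt_of_isTangentTo_of_forall_isExternalPoint [Finite F] (hC : IsProperConic C)
    (hC' : IsProperConic C') (h2 : (2 : F) ≠ 0) {L : Set (ℙ F (Fin 3 → F))}
    (hL : IsTangentTo C L) (hL' : IsTangentTo C' L) (hext : ∀ p ∈ C', IsExternalPoint C p) :
    C'.ncard < C.ncard := by
  obtain ⟨p, hp⟩ := hL'.2
  calc C'.ncard < {L | IsTangentTo C L}.ncard :=
        Set.ncard_lt_ncard_of_incidence (k := 2) (fun x hx => (hext x hx).2.ge)
          (fun T hT => hC'.ncard_inter_le_two h2 hT.1) hL (by simp [hp])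
    _ ≤ C.ncard := hC.ncard_setOf_isTangentTo_le h2

end IsProperConic

/-- Two proper conics of `PG(2,q)` in nested position are disjoint and have no common
tangent line. -/
theorem nested_conics_disjoint_no_common_tangent
    (F : Type) [Field F] [Fintype F] (hq : Odd (Fintype.card F))
    (C C' : Set (Projectivization F (Fin 3 → F)))
    (hC : IsProperConic C) (hC' : IsProperConic C')
    (hnest : NestedPosition C C') :
    Disjoint C C' ∧ ¬∃ L, IsTangentTo C L ∧ IsTangentTo C' L := by
  have h2 : (2 : F) ≠ 0 := Ring.two_ne_zero fun h => by
    have := FiniteField.even_card_iff_char_two.mp h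
    rw [Nat.odd_iff] at hq
    omega
  refine ⟨Set.disjoint_left.mpr fun p hp hp' => ?_, ?_⟩
  · rcases hnest.1 with h | h
    exacts [(h p hp).1 hp', (h p hp).1 hp']
  · rintro ⟨L, hL, hL'⟩
    have hext := forall_isExternalPoint_of_isTangentTo hnest.1 hL hL'
    have hext' := forall_isExternalPoint_of_isTangentTo hnest.2 hL' hL
    exact (hC.ncard_lt_of_isTangentTo_of_forall_isExternalPoint hC' h2 hL hL' hext').asymm
      (hC'.ncard_lt_of_isTangentTo_of_forall_isExternalPoint hC h2 hL' hL hext)
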